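/- Let B = (B,+) be an abelian group, C = (C,·) a group, and φ, γ, ψ : C → Aut(B) group homomorphisms satisfying φ_c γ_{c'} = γ_{c'} φ_c and φ_{c'}(γ_{cc'} ψ_{cc'}^{-1} − γ_{c'} ψ_{c'}^{-1}) = γ_c ψ_c^{-1} − id_B for all c, c' ∈ C, so that B × C with the operations (b_1,c_1) + (b_2,c_2) = (b_1 + φ_{c_1}(b_2), c_1c_2) and ((φ_{c_1}γ_{c_1})(b_1), c_1) ∘ ((φ_{c_2}γ_{c_2})(b_2), c_2) = ((φ_{c_1c_2}γ_{c_1c_2})(ψ_{c_2}^{-1}(b_1) + b_2), c_1c_2) is a skew brace. Then for any subgroup I of B, the subset I × {1} is an ideal of (B × C, +, ∘) if and only if φ_c(I) ⊆ I, γ_c(I) ⊆ I, and ψ_c(I) ⊆ I for all c ∈ C. -/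

import Mathlib

/-! Membership of `I × {1}` is tested on elements `(x, 1)`, and on these the three ideal
conditions are explicit: additive conjugation by `(b, c)` gives `(φ_c x, 1)`, `λ_{(b, c)}` gives
`(γ_c x, 1)`, and `∘`-conjugation gives `(ψ_c x, 1)`. As `γ_{c⁻¹} = γ_c⁻¹`, invariance of `I`
under every `γ_c` already gives `γ_c(I) = I`, which is the equality `λ_a(I × {1}) = I × {1}`. -/

variable {B C : Type*} [AddCommGroup B] [Group C]

/-- The multiplicative group structure that the older Mathlib put on `AddAut A`
(multiplication is composition, `(e₁ * e₂) x = e₁ (e₂ x)`). -/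
instance addAutGroupOld (A : Type*) [Add A] : Group (AddAut A) where
  mul g h := AddEquiv.trans h g
  one := AddEquiv.refl _
  inv := AddEquiv.symm
  mul_assoc _ _ _ := rfl
  one_mul _ := rfl
  mul_one _ := rfl
  inv_mul_cancel := AddEquiv.self_trans_symm

/-- The addition `(b₁,c₁) + (b₂,c₂) = (b₁ + φ_{c₁}(b₂), c₁c₂)` on `B × C`. -/
def sbAdd (φ : C →* AddAut B) : B × C → B × C → B × C :=
  fun p q => (p.1 + φ p.2 q.1, p.2 * q.2)

/-- Negation for `sbAdd`: `-(b,c) = (φ_{c⁻¹}(-b), c⁻¹)`. -/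
def sbNeg (φ : C →* AddAut B) : B × C → B × C :=
  fun p => (φ p.2⁻¹ (-p.1), p.2⁻¹)

/-- The multiplication on `B × C` determined by
`((φ_{c₁}γ_{c₁})(b₁), c₁) ∘ ((φ_{c₂}γ_{c₂})(b₂), c₂)
  = ((φ_{c₁c₂}γ_{c₁c₂})(ψ_{c₂}⁻¹(b₁) + b₂), c₁c₂)`. -/
def sbMul2 (φ γ ψ : C →* AddAut B) : B × C → B × C → B × C :=
  fun p q =>
    (φ (p.2 * q.2) (γ (p.2 * q.2)
      ((ψ q.2).symm ((γ p.2).symm ((φ p.2).symm p.1)) +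
        (γ q.2).symm ((φ q.2).symm q.1))),
     p.2 * q.2)

/-- A subset `S` of `A` is an ideal of the skew brace `(A, add, mul)` with
identity `zero` (shared by both operations): `S` is a subgroup of `(A,+)`,
normal in `(A,+)`, normal in `(A,∘)` (conjugates `a ∘ x ∘ a⁻¹` of elements
of `S`, where `a⁻¹` is the `∘`-inverse of `a`, characterised by
`a ∘ a⁻¹ = 0`, stay in `S`), and `λ_a(S) = S` for every `a`, where
`λ_a(b) = -a + a ∘ b`. -/
def IsIdealOf {A : Type*} (add : A → A → A) (neg : A → A)
    (mul : A → A → A) (zero : A) (S : Set A) : Prop :=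
  zero ∈ S ∧ (∀ x ∈ S, ∀ y ∈ S, add x y ∈ S) ∧ (∀ x ∈ S, neg x ∈ S) ∧
    (∀ a : A, ∀ x ∈ S, add (add a x) (neg a) ∈ S) ∧
    (∀ a x ainv : A, x ∈ S → mul a ainv = zero → mul (mul a x) ainv ∈ S) ∧
    (∀ a : A, (fun b => add (neg a) (mul a b)) '' S = S)

@[simp] lemma addAut_one_apply (x : B) : (1 : AddAut B) x = x := rfl

@[simp] lemma addAut_one_symm_apply (x : B) : (1 : AddAut B).symm x = x := rfl

@[simp] lemma addAut_inv_apply (e : AddAut B) (x : B) : e⁻¹ x = e.symm x := rfl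

lemma addAut_inv_eq_symm (e : AddAut B) : e⁻¹ = e.symm := rfl

lemma symm_map_eq_map_inv (φ : C →* AddAut B) (c : C) : (φ c).symm = φ c⁻¹ := by
  rw [map_inv, addAut_inv_eq_symm]

lemma image_map_eq_of_forall_mapsTo {I : Set B} (φ : C →* AddAut B)
    (hI : ∀ c : C, ∀ x ∈ I, φ c x ∈ I) (c : C) : φ c '' I = I := by
  refine (Set.image_subset_iff.2 (hI c)).antisymm fun y hy => ⟨φ c⁻¹ y, hI c⁻¹ y hy, ?_⟩
  rw [← symm_map_eq_map_inv, AddEquiv.apply_symm_apply]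

section SecondConstruction

variable (φ γ ψ : C →* AddAut B)

lemma sbMul2_mk_one_right (b : B) (c : C) (x : B) :
    sbMul2 φ γ ψ (b, c) (x, 1) = (b + φ c (γ c x), c) := by
  simp [sbMul2, map_add]

lemma sbAdd_sbAdd_sbNeg_mk_one (b : B) (c : C) (x : B) :
    sbAdd φ (sbAdd φ (b, c) (x, 1)) (sbNeg φ (b, c)) = (φ c x, 1) := by
  simp [sbAdd, sbNeg, map_neg]

lemma sbAdd_sbNeg_sbMul2_mk_one (b : B) (c : C) (x : B) :
    sbAdd φ (sbNeg φ (b, c)) (sbMul2 φ γ ψ (b, c) (x, 1)) = (γ c x, 1) := by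
  simp [sbAdd, sbNeg, sbMul2_mk_one_right, map_neg]

lemma image_lambda_prod_singleton_one (I : Set B) (a : B × C) :
    (fun b => sbAdd φ (sbNeg φ a) (sbMul2 φ γ ψ a b)) '' (I ×ˢ {1}) = (γ a.2 '' I) ×ˢ {1} := by
  obtain ⟨b, c⟩ := a
  ext ⟨y, c'⟩
  simp [sbAdd_sbNeg_sbMul2_mk_one, eq_comm, ← and_assoc, exists_and_right]

lemma sbMul2_zero_inv (c : C) : sbMul2 φ γ ψ (0, c) (0, c⁻¹) = (0, 1) := by
  simp [sbMul2]

/-- Writing `(b, c) = ((φ_c γ_c) u, c)`, right multiplication by `(x, 1)` replaces `u` by `u + x`,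
so conjugation leaves `ψ_{c⁻¹}⁻¹ x = ψ_c x`. -/
lemma sbMul2_conj_mk_one (b : B) (c : C) (x : B) (a' : B × C)
    (h : sbMul2 φ γ ψ (b, c) a' = (0, 1)) :
    sbMul2 φ γ ψ (sbMul2 φ γ ψ (b, c) (x, 1)) a' = (ψ c x, 1) := by
  obtain ⟨b', c'⟩ := a'
  have hc : c * c' = 1 := congrArg Prod.snd h
  obtain rfl : c' = c⁻¹ := eq_inv_of_mul_eq_one_right hc
  have hu : (ψ c⁻¹).symm ((γ c).symm ((φ c).symm b)) + (γ c⁻¹).symm ((φ c⁻¹).symm b') = 0 := by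
    simpa [sbMul2] using congrArg Prod.fst h
  rw [sbMul2_mk_one_right]
  simp only [sbMul2, hc, map_add, map_one, addAut_one_apply, AddEquiv.symm_apply_apply]
  rw [add_right_comm, hu, zero_add, symm_map_eq_map_inv _ c⁻¹, inv_inv]

end SecondConstruction

theorem second_construction_ideal_iff_general (φ γ ψ : C →* AddAut B)
    (I : AddSubgroup B) :
    IsIdealOf (sbAdd φ) (sbNeg φ) (sbMul2 φ γ ψ) ((0 : B), (1 : C))
        ((I : Set B) ×ˢ ({1} : Set C)) ↔
    ((∀ c : C, ∀ x ∈ I, φ c x ∈ I) ∧ (∀ c : C, ∀ x ∈ I, γ c x ∈ I) ∧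
      (∀ c : C, ∀ x ∈ I, ψ c x ∈ I)) := by
  constructor
  · rintro ⟨-, -, -, hconj, hconj', hlam⟩
    refine ⟨fun c x hx => ?_, fun c x hx => ?_, fun c x hx => ?_⟩
    · simpa [sbAdd_sbAdd_sbNeg_mk_one] using hconj (0, c) (x, 1) ⟨hx, rfl⟩
    · have hmem : (γ c x, (1 : C)) ∈ (γ c '' I) ×ˢ {1} := ⟨Set.mem_image_of_mem _ hx, rfl⟩
      rw [← image_lambda_prod_singleton_one φ γ ψ _ (0, c), hlam] at hmem
      exact hmem.1
    · have hinv := sbMul2_zero_inv φ γ ψ c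
      simpa [sbMul2_conj_mk_one φ γ ψ 0 c x _ hinv] using hconj' (0, c) (x, 1) _ ⟨hx, rfl⟩ hinv
  · rintro ⟨hφ, hγ, hψ⟩
    refine ⟨⟨I.zero_mem, rfl⟩, ?_, ?_, ?_, ?_, fun a => ?_⟩
    · rintro ⟨x, _⟩ ⟨hx, rfl⟩ ⟨y, _⟩ ⟨hy, rfl⟩
      exact ⟨by simpa [sbAdd] using I.add_mem hx hy, by simp [sbAdd]⟩
    · rintro ⟨x, _⟩ ⟨hx, rfl⟩
      exact ⟨by simpa [sbNeg] using I.neg_mem hx, by simp [sbNeg]⟩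
    · rintro ⟨b, c⟩ ⟨x, _⟩ ⟨hx, rfl⟩
      rw [sbAdd_sbAdd_sbNeg_mk_one]
      exact ⟨hφ c x hx, rfl⟩
    · rintro ⟨b, c⟩ ⟨x, _⟩ a' ⟨hx, rfl⟩ hinv
      rw [sbMul2_conj_mk_one φ γ ψ b c x a' hinv]
      exact ⟨hψ c x hx, rfl⟩
    · rw [image_lambda_prod_singleton_one, image_map_eq_of_forall_mapsTo γ hγ]

/-- **Theorem 3.3(e)**: under the conditions making `(B × C, +, ∘)` (second
construction) a skew brace, for a subgroup `I` of `B` the subset `I × {1}`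
is an ideal of `(B × C, +, ∘)` if and only if `I` is invariant under all
`φ_c`, `γ_c` and `ψ_c`. -/
theorem second_construction_ideal_iff (φ γ ψ : C →* AddAut B)
    (h1 : ∀ (c c' : C) (b : B), φ c (γ c' b) = γ c' (φ c b))
    (h2 : ∀ (c c' : C) (b : B),
      φ c' (γ (c * c') ((ψ (c * c')).symm b) - γ c' ((ψ c').symm b)) =
        γ c ((ψ c).symm b) - b)
    (I : AddSubgroup B) :
    IsIdealOf (sbAdd φ) (sbNeg φ) (sbMul2 φ γ ψ) ((0 : B), (1 : C))
        ((I : Set B) ×ˢ ({1} : Set C)) ↔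
    ((∀ c : C, ∀ x ∈ I, φ c x ∈ I) ∧ (∀ c : C, ∀ x ∈ I, γ c x ∈ I) ∧
      (∀ c : C, ∀ x ∈ I, ψ c x ∈ I)) :=
  second_construction_ideal_iff_general φ γ ψ I
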